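/- Let 𝔖 be an interval system on X, V, W, Z complete Hausdorff commutative topological groups, L : V × W → Z biadditive and continuous in its second variable, and μ : 𝔖 → W a measure. If f, g : X → V are Lebesgue–McShane integrable, then f + g and −f are Lebesgue–McShane integrable, ∫L(f + g, μ) = ∫L(f, μ) + ∫L(g, μ), and ∫L(−f, μ) = −∫L(f, μ). -/

import Mathlib

/-!
Negation is immediate: reflecting an envelope of `f` in `V` gives an envelope of `-f` whose step
functions are the negatives of the original ones.

For the sum, take envelopes `𝒜 ⊇ graph f` and `ℬ ⊇ graph g` containing the graphs of step functions
`σ` and `τ`. Refining the generating systems until `σ` and `τ` are constant on each generator, the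
centred envelopes `𝒜 - σ` and `ℬ - τ` are again generated by countable subfamilies of `𝔖`, and now
contain `0` in every fibre. Their fibrewise sum over a common generating system, shifted back by
`σ + τ`, is an envelope `𝒞` of `f + g`. A step function below the centred sum is split along a countable
disjoint refinement of its steps into pieces below the two centred envelopes; by σ-additivity of `μ`
and continuity of `L` in its second variable, its value is the limit of the finite partial sums, and
these are step integrals below `𝒜 - σ` and `ℬ - τ` because off the finitely many pieces used the
value `0` is allowed. Hence `∫^p L(𝒞, μ) ⊆ closure (∫^p L(𝒜, μ) + ∫^p L(ℬ, μ))`.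
-/

/-- A family `S` of subsets of `X` is an *interval system* if for all `A, B ∈ S` there exist
countable pairwise disjoint families `D₁, D₂ ⊆ S` with `⋃₀ D₁ = A \ B` and `⋃₀ D₂ = A ∩ B`. -/
def IsIntervalSystem {X : Type*} (S : Set (Set X)) : Prop :=
  ∀ A ∈ S, ∀ B ∈ S,
    (∃ D : Set (Set X), D ⊆ S ∧ D.Countable ∧ D.PairwiseDisjoint id ∧ ⋃₀ D = A \ B) ∧
    (∃ D : Set (Set X), D ⊆ S ∧ D.Countable ∧ D.PairwiseDisjoint id ∧ ⋃₀ D = A ∩ B)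

/-- A map `μ` defined on the sets of `X`, with values in a commutative topological group, is
a *measure* on the set system `S` if it is σ-additive on `S`: whenever a member `B` of `S`
is the union of a countable pairwise disjoint family `(A i)` of members of `S`, the net of
finite partial sums `∑ i ∈ Ξ, μ (A i)` (over finite `Ξ`, directed by inclusion) converges
to `μ B`, i.e. `HasSum (fun i => μ (A i)) (μ B)`. -/
def IsAddMeasure {X W : Type*} [AddCommMonoid W] [TopologicalSpace W]
    (S : Set (Set X)) (μ : Set X → W) : Prop :=
  ∀ (ι : Type) (A : ι → Set X) (B : Set X), Countable ι → B ∈ S →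
    (∀ i, A i ∈ S) → (Pairwise fun i j => Disjoint (A i) (A j)) →
    (⋃ i, A i) = B → HasSum (fun i => μ (A i)) (μ B)

/-- The value at `x` of the step function `∑ j, c j • χ_{E j}`. -/
noncomputable def stepVal {X V : Type*} [AddCommMonoid V] {n : ℕ}
    (c : Fin n → V) (E : Fin n → Set X) (x : X) : V :=
  ∑ j, (E j).indicator (fun _ => c j) x

/-- `A ⊆ V × X` is an *envelope* of sets in `V` with respect to the set system `S` if
(i) it contains the graph of some step function over `S`, and (ii) it has a countable
generating system `D ⊆ S`:  `A = (⋃ d ∈ D, A^d ×ˢ d) ∪ ({0} ×ˢ (X \ ⋃₀ D))`, where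
`A^d = {v | ∀ x ∈ d, (v, x) ∈ A}`. -/
def IsEnvelope {X V : Type*} [AddCommMonoid V] (S : Set (Set X)) (A : Set (V × X)) : Prop :=
  (∃ (n : ℕ) (c : Fin n → V) (E : Fin n → Set X),
      (∀ j, E j ∈ S) ∧ ∀ x, (stepVal c E x, x) ∈ A) ∧
  (∃ D : Set (Set X), D ⊆ S ∧ D.Countable ∧
      A = (⋃ d ∈ D, {v : V | ∀ x ∈ d, (v, x) ∈ A} ×ˢ d) ∪ (({0} : Set V) ×ˢ (⋃₀ D)ᶜ))

/-- The pre-integral `∫^p L(A, μ)` of an envelope: the closure of the set of all values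
`∑ j, L (c j) (μ (E j))` over step functions whose graph is contained in `A`. -/
def preIntegral {X V W Z : Type*} [AddCommMonoid V] [AddCommMonoid Z] [TopologicalSpace Z]
    (S : Set (Set X)) (L : V → W → Z) (μ : Set X → W) (A : Set (V × X)) : Set Z :=
  closure { z : Z | ∃ (n : ℕ) (c : Fin n → V) (E : Fin n → Set X),
    (∀ j, E j ∈ S) ∧ (∀ x, (stepVal c E x, x) ∈ A) ∧ z = ∑ j, L (c j) (μ (E j)) }

/-- `f : X → V` has Lebesgue–McShane integral `a` if for every neighborhood `T` of `0` in `Z`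
there is an envelope `A` containing the graph of `f` with `∫^p L(A, μ) ⊆ a + T`. -/
def HasLMIntegral {X V W Z : Type*} [AddCommMonoid V] [AddCommMonoid Z] [TopologicalSpace Z]
    (S : Set (Set X)) (L : V → W → Z) (μ : Set X → W) (f : X → V) (a : Z) : Prop :=
  ∀ T ∈ nhds (0 : Z), ∃ A : Set (V × X), IsEnvelope S A ∧ (∀ x, (f x, x) ∈ A) ∧
    preIntegral S L μ A ⊆ {z | ∃ t ∈ T, z = a + t}

open Set Function
open scoped Pointwise Topology

section SetSystems

variable {X : Type*} {S S' : Set (Set X)} {A B : Set X}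

def IsCountableDisjointUnion (S : Set (Set X)) (A : Set X) : Prop :=
  ∃ D ⊆ S, D.Countable ∧ D.PairwiseDisjoint id ∧ ⋃₀ D = A

namespace IsCountableDisjointUnion

theorem of_mem (hA : A ∈ S) : IsCountableDisjointUnion S A :=
  ⟨{A}, singleton_subset_iff.2 hA, countable_singleton A, pairwiseDisjoint_singleton A id,
    sUnion_singleton A⟩

theorem empty : IsCountableDisjointUnion S ∅ :=
  ⟨∅, empty_subset S, countable_empty, pairwiseDisjoint_empty, sUnion_empty⟩

theorem mono (h : IsCountableDisjointUnion S A) (hS : ∀ p ∈ S, p ⊆ A → p ∈ S') :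
    IsCountableDisjointUnion S' A := by
  obtain ⟨D, hDS, hDc, hDd, rfl⟩ := h
  exact ⟨D, fun p hp => hS p (hDS hp) (subset_sUnion_of_mem hp), hDc, hDd, rfl⟩

theorem iUnion {ι : Type*} [Countable ι] {A : ι → Set X} (hd : Pairwise (Disjoint on A))
    (h : ∀ i, IsCountableDisjointUnion S (A i)) : IsCountableDisjointUnion S (⋃ i, A i) := by
  choose D hDS hDc hDd hDU using h
  refine ⟨⋃ i, D i, iUnion_subset hDS, countable_iUnion hDc, ?_, by simp_rw [sUnion_iUnion, hDU]⟩
  have hsup : ∀ i, ⨆ p ∈ D i, p = A i := fun i => by rw [← sSup_eq_iSup, ← hDU i]; rfl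
  rw [← biUnion_univ]
  refine PairwiseDisjoint.biUnion ?_ fun i _ => hDd i
  simpa only [PairwiseDisjoint, id, hsup] using hd.set_pairwise univ

theorem union (hAB : Disjoint A B) (hA : IsCountableDisjointUnion S A)
    (hB : IsCountableDisjointUnion S B) : IsCountableDisjointUnion S (A ∪ B) := by
  rw [union_eq_iUnion]
  refine .iUnion (fun i j hij => ?_) (Bool.rec hB hA)
  cases i <;> cases j <;> simp_all [onFun, hAB.symm]

theorem bind (h : IsCountableDisjointUnion S A) (h' : ∀ p ∈ S, IsCountableDisjointUnion S' p) :
    IsCountableDisjointUnion S' A := by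
  obtain ⟨D, hDS, hDc, hDd, rfl⟩ := h
  have := hDc.to_subtype
  rw [sUnion_eq_iUnion]
  exact .iUnion ((pairwise_subtype_iff_pairwise_set D _).2 hDd) fun p => h' p (hDS p.2)

theorem inter_of_subset_or_disjoint (h : IsCountableDisjointUnion S A)
    (hB : ∀ p ∈ S, p ⊆ B ∨ Disjoint p B) :
    IsCountableDisjointUnion S (A ∩ B) := by
  obtain ⟨D, hDS, hDc, hDd, rfl⟩ := h
  refine ⟨{p ∈ D | p ⊆ B}, (sep_subset D _).trans hDS, hDc.mono (sep_subset D _),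
    hDd.subset (sep_subset D _), ?_⟩
  ext x
  simp only [mem_sUnion, mem_sep_iff, mem_inter_iff]
  constructor
  · rintro ⟨p, ⟨hp, hpB⟩, hx⟩
    exact ⟨⟨p, hp, hx⟩, hpB hx⟩
  · rintro ⟨⟨p, hp, hx⟩, hxB⟩
    exact ⟨p, ⟨hp, (hB p (hDS hp)).resolve_right (not_disjoint_iff.2 ⟨x, hx, hxB⟩)⟩, hx⟩

end IsCountableDisjointUnion

namespace IsIntervalSystem

open IsCountableDisjointUnion

variable (hS : IsIntervalSystem S)
include hS

theorem isCountableDisjointUnion_diff (hA : A ∈ S) (hB : B ∈ S) :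
    IsCountableDisjointUnion S (A \ B) :=
  let ⟨D, hDS, hDc, hDd, hDU⟩ := (hS A hA B hB).1
  ⟨D, hDS, hDc, hDd, hDU⟩

theorem isCountableDisjointUnion_inter (hA : A ∈ S) (hB : B ∈ S) :
    IsCountableDisjointUnion S (A ∩ B) :=
  let ⟨D, hDS, hDc, hDd, hDU⟩ := (hS A hA B hB).2
  ⟨D, hDS, hDc, hDd, hDU⟩

theorem isCountableDisjointUnion_homogeneous {ι : Type*} {E : ι → Set X} (s : Finset ι)
    (hE : ∀ i ∈ s, E i ∈ S) (hA : A ∈ S) :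
    IsCountableDisjointUnion {p ∈ S | ∀ i ∈ s, p ⊆ E i ∨ Disjoint p (E i)} A := by
  classical
  induction s using Finset.induction_on with
  | empty => exact of_mem ⟨hA, by simp⟩
  | insert j s _ ih =>
    simp only [Finset.forall_mem_insert] at hE ⊢
    refine (ih hE.2).bind fun p ⟨hp, hps⟩ => ?_
    have hered : ∀ q ⊆ p, ∀ i ∈ s, q ⊆ E i ∨ Disjoint q (E i) := fun q hq i hi =>
      (hps i hi).imp hq.trans (Disjoint.mono_left hq)
    rw [← inter_union_sdiff p (E j)]
    refine .union disjoint_sdiff_inter.symm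
      ((hS.isCountableDisjointUnion_inter hp hE.1).mono fun q hq hqp => ⟨hq, ?_, ?_⟩)
      ((hS.isCountableDisjointUnion_diff hp hE.1).mono fun q hq hqp => ⟨hq, ?_, ?_⟩)
    · exact .inl (hqp.trans inter_subset_right)
    · exact hered q (hqp.trans inter_subset_left)
    · exact .inr (disjoint_sdiff_left.mono_left hqp)
    · exact hered q (hqp.trans sdiff_subset)

theorem isCountableDisjointUnion_inter_disjointed {ι : Type*} [Preorder ι]
    [LocallyFiniteOrderBot ι] {e : ι → Set X} (he : ∀ i, e i ∈ S) {s : Finset ι} {i : ι}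
    (hi : Finset.Iic i ⊆ s) (hA : A ∈ S) :
    IsCountableDisjointUnion {p ∈ S | (∀ j ∈ s, p ⊆ e j ∨ Disjoint p (e j)) ∧ p ⊆ e i}
      (A ∩ disjointed e i) := by
  have hhom := hS.isCountableDisjointUnion_homogeneous s (fun j _ => he j) hA
  refine (hhom.inter_of_subset_or_disjoint fun p ⟨_, hp⟩ => ?_).mono fun p ⟨hpS, hp⟩ hpA =>
    ⟨hpS, hp, hpA.trans (inter_subset_right.trans (disjointed_le e i))⟩
  rw [disjointed_apply, Finset.sup_set_eq_biUnion]
  by_cases h : p ⊆ e i ∧ ∀ j < i, Disjoint p (e j)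
  · exact .inl (subset_sdiff.2
      ⟨h.1, disjoint_iUnion₂_right.2 fun j hj => h.2 j (Finset.mem_Iio.1 hj)⟩)
  right
  push Not at h
  rcases hp i (hi (Finset.mem_Iic.2 le_rfl)) with hpi | hpi
  · obtain ⟨j, hj, hpj⟩ := h hpi
    have hpj : p ⊆ e j := (hp j (hi (Finset.mem_Iic.2 hj.le))).resolve_right hpj
    exact disjoint_sdiff_right.mono_left (subset_iUnion₂_of_subset
      (t := fun j (_ : j ∈ Finset.Iio i) => e j) j (Finset.mem_Iio.2 hj) hpj)
  · exact hpi.mono_right sdiff_subset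

theorem isCountableDisjointUnion_of_subset_sUnion {𝔈 : Set (Set X)} (h𝔈S : 𝔈 ⊆ S)
    (h𝔈c : 𝔈.Countable) (hA : A ∈ S) (hcov : A ⊆ ⋃₀ 𝔈) :
    IsCountableDisjointUnion {p ∈ S | ∃ e ∈ 𝔈, p ⊆ e} A := by
  rcases 𝔈.eq_empty_or_nonempty with rfl | hne
  · rw [sUnion_empty, subset_empty_iff] at hcov
    exact hcov ▸ .empty
  obtain ⟨e, rfl⟩ := h𝔈c.exists_eq_range hne
  rw [sUnion_range] at hcov
  rw [← inter_eq_left.2 hcov, ← iUnion_disjointed, inter_iUnion]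
  refine .iUnion (fun i j hij => (disjoint_disjointed e hij).mono inter_subset_right
    inter_subset_right) fun k => ?_
  exact (hS.isCountableDisjointUnion_inter_disjointed (fun k => h𝔈S ⟨k, rfl⟩) subset_rfl hA).mono
    fun p hp _ => ⟨hp.1, e k, ⟨k, rfl⟩, hp.2.2⟩

theorem isCountableDisjointUnion_iUnion_homogeneous {n : ℕ} {E : Fin n → Set X}
    (hE : ∀ j, E j ∈ S) :
    IsCountableDisjointUnion {p ∈ S | ∀ j, p ⊆ E j ∨ Disjoint p (E j)} (⋃ j, E j) := by
  rw [← iUnion_disjointed]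
  refine .iUnion (disjoint_disjointed E) fun j => ?_
  rw [← inter_eq_right.2 (disjointed_le E j)]
  exact (hS.isCountableDisjointUnion_inter_disjointed hE (Finset.subset_univ _) (hE j)).mono
    fun p hp _ => ⟨hp.1, fun i => hp.2.1 i (Finset.mem_univ i)⟩

theorem exists_homogeneous_refinement {𝔇 : Set (Set X)} (h𝔇S : 𝔇 ⊆ S) (h𝔇c : 𝔇.Countable)
    {ι : Type*} [Fintype ι] {F : ι → Set X} (hF : ∀ k, F k ∈ S) :
    ∃ 𝔇' ⊆ S, 𝔇'.Countable ∧ (∀ p ∈ 𝔇', ∀ k, p ⊆ F k ∨ Disjoint p (F k)) ∧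
      (∀ p ∈ 𝔇', ∃ D ∈ 𝔇, p ⊆ D) ∧ ∀ D ∈ 𝔇, ∀ x ∈ D, ∃ p ∈ 𝔇', x ∈ p ∧ p ⊆ D := by
  choose! P hPS hPc _ hPU using fun D (hD : D ∈ 𝔇) =>
    hS.isCountableDisjointUnion_homogeneous Finset.univ (fun k _ => hF k) (h𝔇S hD)
  have hPsub : ∀ D ∈ 𝔇, ∀ p ∈ P D, p ⊆ D := fun D hD p hp => hPU D hD ▸ subset_sUnion_of_mem hp
  refine ⟨⋃ D ∈ 𝔇, P D, iUnion₂_subset fun D hD => (hPS D hD).trans (sep_subset _ _),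
    h𝔇c.biUnion hPc, ?_, ?_, fun D hD x hx => ?_⟩
  · simp only [mem_iUnion₂]
    rintro p ⟨D, hD, hp⟩ k
    exact (hPS D hD hp).2 k (Finset.mem_univ k)
  · simp only [mem_iUnion₂]
    rintro p ⟨D, hD, hp⟩
    exact ⟨D, hD, hPsub D hD p hp⟩
  · rw [← hPU D hD] at hx
    obtain ⟨p, hp, hxp⟩ := hx
    exact ⟨p, mem_iUnion₂.2 ⟨D, hD, hp⟩, hxp, hPsub D hD p hp⟩

end IsIntervalSystem

end SetSystems

section StepFunctions

variable {X V : Type*}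

theorem Fin.append_mem {α : Type*} {s : Set α} {m n : ℕ} {u : Fin m → α} {v : Fin n → α}
    (hu : ∀ i, u i ∈ s) (hv : ∀ i, v i ∈ s) (k : Fin (m + n)) : Fin.append u v k ∈ s :=
  Fin.addCases (motive := fun k => Fin.append u v k ∈ s) (by simpa using hu) (by simpa using hv) k

theorem stepVal_append [AddCommMonoid V] {m n : ℕ} (c : Fin m → V) (d : Fin n → V)
    (E : Fin m → Set X) (F : Fin n → Set X) (x : X) :
    stepVal (Fin.append c d) (Fin.append E F) x = stepVal c E x + stepVal d F x := by
  simp [stepVal, Fin.sum_univ_add]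

theorem stepVal_neg [AddCommGroup V] {n : ℕ} (c : Fin n → V) (E : Fin n → Set X) (x : X) :
    stepVal (-c) E x = -stepVal c E x := by
  simp only [stepVal, Pi.neg_apply, indicator_neg, Finset.sum_neg_distrib]

-- The value of `stepVal c E` on a set `q` that no `E j` cuts; junk on other sets.
open Classical in
noncomputable def stepValOn [AddCommMonoid V] {n : ℕ} (c : Fin n → V) (E : Fin n → Set X)
    (q : Set X) : V :=
  ∑ j, if q ⊆ E j then c j else 0

theorem stepVal_eq_stepValOn [AddCommMonoid V] {n : ℕ} (c : Fin n → V) {E : Fin n → Set X}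
    {q : Set X} (hq : ∀ j, q ⊆ E j ∨ Disjoint q (E j)) {y : X} (hy : y ∈ q) :
    stepVal c E y = stepValOn c E q := by
  refine Finset.sum_congr rfl fun j _ => ?_
  rcases hq j with h | h
  · simp [h, h hy]
  · have hyE : y ∉ E j := disjoint_left.1 h hy
    rw [if_neg fun h' => hyE (h' hy), indicator_of_notMem hyE]

theorem apply_neg_left {V W Z : Type*} [AddCommGroup V] [AddCommGroup Z] {L : V → W → Z}
    (hL1 : ∀ v₁ v₂ w, L (v₁ + v₂) w = L v₁ w + L v₂ w) (v : V) (w : W) : L (-v) w = -L v w :=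
  map_neg (AddMonoidHom.mk' (L · w) fun a b => hL1 a b w) v

end StepFunctions

section Envelopes

variable {X V : Type*} {S 𝔇 : Set (Set X)}

-- The paper's `𝒜^d`.
def commonFiber (A : Set (V × X)) (d : Set X) : Set V :=
  {v | ∀ x ∈ d, (v, x) ∈ A}

theorem commonFiber_anti {A : Set (V × X)} {d d' : Set X} (h : d ⊆ d') :
    commonFiber A d' ⊆ commonFiber A d :=
  fun _ hv x hx => hv x (h hx)

theorem commonFiber_empty (A : Set (V × X)) : commonFiber A ∅ = univ :=
  eq_univ_of_forall fun _ _ h => h.elim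

theorem zero_mem_commonFiber_add [AddZeroClass V] {A B : Set (V × X)}
    (hA0 : ∀ x, ((0 : V), x) ∈ A) (hB0 : ∀ x, ((0 : V), x) ∈ B) (d : Set X) :
    (0 : V) ∈ commonFiber A d + commonFiber B d :=
  zero_add (0 : V) ▸ add_mem_add (fun x _ => hA0 x) fun x _ => hB0 x

def blockSet [Zero V] (𝔇 : Set (Set X)) (M : Set X → Set V) : Set (V × X) :=
  (⋃ d ∈ 𝔇, M d ×ˢ d) ∪ ({0} ×ˢ (⋃₀ 𝔇)ᶜ)

theorem mem_blockSet [Zero V] {M : Set X → Set V} {v : V} {x : X} :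
    (v, x) ∈ blockSet 𝔇 M ↔ (∃ d ∈ 𝔇, x ∈ d ∧ v ∈ M d) ∨ (v = 0 ∧ x ∉ ⋃₀ 𝔇) := by
  simp only [blockSet, mem_union, mem_iUnion₂, mem_prod, mem_singleton_iff, mem_compl_iff,
    exists_prop, and_comm (a := v ∈ M _)]

theorem zero_mem_blockSet [Zero V] {M : Set X → Set V} (hM : ∀ d ∈ 𝔇, 0 ∈ M d) (x : X) :
    ((0 : V), x) ∈ blockSet 𝔇 M := by
  by_cases hx : x ∈ ⋃₀ 𝔇
  · obtain ⟨d, hd, hxd⟩ := hx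
    exact mem_blockSet.2 (.inl ⟨d, hd, hxd, hM d hd⟩)
  · exact mem_blockSet.2 (.inr ⟨rfl, hx⟩)

def IsGeneratedBy [Zero V] (S 𝔇 : Set (Set X)) (A : Set (V × X)) : Prop :=
  𝔇 ⊆ S ∧ 𝔇.Countable ∧ A = blockSet 𝔇 (commonFiber A)

theorem isEnvelope_iff [AddCommMonoid V] {A : Set (V × X)} :
    IsEnvelope S A ↔ (∃ (n : ℕ) (c : Fin n → V) (E : Fin n → Set X),
      (∀ j, E j ∈ S) ∧ ∀ x, (stepVal c E x, x) ∈ A) ∧ ∃ 𝔇, IsGeneratedBy S 𝔇 A :=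
  Iff.rfl

namespace IsGeneratedBy

variable [Zero V] {A : Set (V × X)}

theorem of_forall (h𝔇S : 𝔇 ⊆ S) (h𝔇c : 𝔇.Countable)
    (hmem : ∀ v x, (v, x) ∈ A → (∃ d ∈ 𝔇, x ∈ d ∧ v ∈ commonFiber A d) ∨ (v = 0 ∧ x ∉ ⋃₀ 𝔇))
    (hzero : ∀ x ∉ ⋃₀ 𝔇, ((0 : V), x) ∈ A) : IsGeneratedBy S 𝔇 A := by
  refine ⟨h𝔇S, h𝔇c, Subset.antisymm (fun ⟨v, x⟩ hvx => mem_blockSet.2 (hmem v x hvx)) ?_⟩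
  rintro ⟨v, x⟩ hvx
  rcases mem_blockSet.1 hvx with ⟨d, -, hxd, hv⟩ | ⟨rfl, hx⟩
  exacts [hv x hxd, hzero x hx]

theorem mem_cases (h : IsGeneratedBy S 𝔇 A) {v : V} {x : X} (hvx : (v, x) ∈ A) :
    (∃ d ∈ 𝔇, x ∈ d ∧ v ∈ commonFiber A d) ∨ (v = 0 ∧ x ∉ ⋃₀ 𝔇) := by
  rw [h.2.2] at hvx
  exact mem_blockSet.1 hvx

theorem eq_zero (h : IsGeneratedBy S 𝔇 A) {v : V} {x : X} (hvx : (v, x) ∈ A)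
    (hx : x ∉ ⋃₀ 𝔇) : v = 0 := by
  rcases h.mem_cases hvx with ⟨d, hd, hxd, -⟩ | ⟨hv, -⟩
  exacts [absurd ⟨d, hd, hxd⟩ hx, hv]

theorem zero_mem (h : IsGeneratedBy S 𝔇 A) {x : X} (hx : x ∉ ⋃₀ 𝔇) : ((0 : V), x) ∈ A := by
  rw [h.2.2]
  exact mem_blockSet.2 (.inr ⟨rfl, hx⟩)

end IsGeneratedBy

theorem isGeneratedBy_blockSet [Zero V] (h𝔇S : 𝔇 ⊆ S) (h𝔇c : 𝔇.Countable)
    (M : Set X → Set V) : IsGeneratedBy S 𝔇 (blockSet 𝔇 M) := by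
  refine .of_forall h𝔇S h𝔇c (fun v x hvx => ?_) fun x hx => mem_blockSet.2 (.inr ⟨rfl, hx⟩)
  refine (mem_blockSet.1 hvx).imp (fun ⟨d, hd, hxd, hv⟩ => ⟨d, hd, hxd, fun y hy => ?_⟩) id
  exact mem_blockSet.2 (.inl ⟨d, hd, hy, hv⟩)

def fiberShift [Add V] (τ : X → V) (A : Set (V × X)) : Set (V × X) :=
  {p | (p.1 + τ p.2, p.2) ∈ A}

theorem IsGeneratedBy.fiberShift [AddCommMonoid V] (hS : IsIntervalSystem S)
    {A : Set (V × X)} (h : IsGeneratedBy S 𝔇 A) {n : ℕ} {c : Fin n → V} {F : Fin n → Set X}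
    (hF : ∀ k, F k ∈ S) (hτ : ∀ x ∉ ⋃₀ 𝔇, stepVal c F x = 0) :
    ∃ 𝔇', IsGeneratedBy S 𝔇' (fiberShift (stepVal c F) A) ∧ ⋃₀ 𝔇' = ⋃₀ 𝔇 := by
  obtain ⟨𝔇', h𝔇'S, h𝔇'c, hhom, hsub, hcov⟩ := hS.exists_homogeneous_refinement h.1 h.2.1 hF
  have hU : ⋃₀ 𝔇' = ⋃₀ 𝔇 := by
    refine Subset.antisymm (sUnion_subset fun p hp => ?_) fun x ⟨D, hD, hxD⟩ => ?_
    · obtain ⟨D, hD, hpD⟩ := hsub p hp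
      exact hpD.trans (subset_sUnion_of_mem hD)
    · obtain ⟨p, hp, hxp, -⟩ := hcov D hD x hxD
      exact ⟨p, hp, hxp⟩
  refine ⟨𝔇', .of_forall h𝔇'S h𝔇'c (fun v x hvx => ?_) fun x hx => ?_, hU⟩
  · rcases h.mem_cases hvx with ⟨D, hD, hxD, hv⟩ | ⟨hv, hx⟩
    · obtain ⟨p, hp, hxp, hpD⟩ := hcov D hD x hxD
      refine .inl ⟨p, hp, hxp, fun y hy => ?_⟩
      have hconst : stepVal c F y = stepVal c F x := by
        rw [stepVal_eq_stepValOn c (hhom p hp) hy, stepVal_eq_stepValOn c (hhom p hp) hxp]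
      change (v + stepVal c F y, y) ∈ A
      exact hconst ▸ hv y (hpD hy)
    · rw [hτ x hx, add_zero] at hv
      exact .inr ⟨hv, hU ▸ hx⟩
  · rw [hU] at hx
    change (0 + stepVal c F x, x) ∈ A
    rw [hτ x hx, zero_add]
    exact h.zero_mem hx

theorem IsEnvelope.exists_centered [AddCommMonoid V] (hS : IsIntervalSystem S) {A : Set (V × X)}
    (hA : IsEnvelope S A) :
    ∃ (n : ℕ) (c : Fin n → V) (F : Fin n → Set X) (𝔇 : Set (Set X)), (∀ k, F k ∈ S) ∧
      (∀ x, (stepVal c F x, x) ∈ A) ∧ IsGeneratedBy S 𝔇 (fiberShift (stepVal c F) A) ∧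
      ∀ x ∉ ⋃₀ 𝔇, stepVal c F x = 0 := by
  obtain ⟨⟨n, c, F, hF, hσ⟩, 𝔇, hgen⟩ := isEnvelope_iff.1 hA
  have hσ0 : ∀ x ∉ ⋃₀ 𝔇, stepVal c F x = 0 := fun x hx => hgen.eq_zero (hσ x) hx
  obtain ⟨𝔇', hgen', hU⟩ := hgen.fiberShift hS hF hσ0
  exact ⟨n, c, F, 𝔇', hF, hσ, hgen', hU ▸ hσ0⟩

theorem IsGeneratedBy.exists_blockSet_add [AddCommMonoid V] (hS : IsIntervalSystem S)
    {𝔇₁ 𝔇₂ : Set (Set X)} {A B : Set (V × X)} (hA : IsGeneratedBy S 𝔇₁ A)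
    (hB : IsGeneratedBy S 𝔇₂ B) (hA0 : ∀ x, ((0 : V), x) ∈ A) (hB0 : ∀ x, ((0 : V), x) ∈ B) :
    ∃ 𝔇 ⊆ S, 𝔇.Countable ∧ ⋃₀ 𝔇₁ ∪ ⋃₀ 𝔇₂ ⊆ ⋃₀ 𝔇 ∧
      ∀ v w x, (v, x) ∈ A → (w, x) ∈ B →
        (v + w, x) ∈ blockSet 𝔇 (fun d => commonFiber A d + commonFiber B d) := by
  choose! P hPS hPc _ hPU using fun D₁ (h₁ : D₁ ∈ 𝔇₁) D₂ (h₂ : D₂ ∈ 𝔇₂) =>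
    hS.isCountableDisjointUnion_inter (hA.1 h₁) (hB.1 h₂)
  have hzA : ∀ d, (0 : V) ∈ commonFiber A d := fun _ x _ => hA0 x
  have hzB : ∀ d, (0 : V) ∈ commonFiber B d := fun _ x _ => hB0 x
  refine ⟨𝔇₁ ∪ 𝔇₂ ∪ ⋃ D₁ ∈ 𝔇₁, ⋃ D₂ ∈ 𝔇₂, P D₁ D₂,
    union_subset (union_subset hA.1 hB.1)
      (iUnion₂_subset fun D₁ h₁ => iUnion₂_subset fun D₂ h₂ => hPS D₁ h₁ D₂ h₂),
    (hA.2.1.union hB.2.1).union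
      (hA.2.1.biUnion fun D₁ h₁ => hB.2.1.biUnion fun D₂ h₂ => hPc D₁ h₁ D₂ h₂),
    by rw [← sUnion_union]; exact sUnion_mono subset_union_left, fun v w x hv hw => ?_⟩
  rcases hA.mem_cases hv with ⟨D₁, h₁, hx₁, hv₁⟩ | ⟨rfl, -⟩ <;>
    rcases hB.mem_cases hw with ⟨D₂, h₂, hx₂, hw₂⟩ | ⟨rfl, -⟩
  · obtain ⟨e, he, hxe⟩ : x ∈ ⋃₀ P D₁ D₂ := (hPU D₁ h₁ D₂ h₂).symm ▸ ⟨hx₁, hx₂⟩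
    have hesub : e ⊆ D₁ ∩ D₂ := hPU D₁ h₁ D₂ h₂ ▸ subset_sUnion_of_mem he
    exact mem_blockSet.2 (.inl ⟨e, .inr (mem_iUnion₂.2 ⟨D₁, h₁, mem_iUnion₂.2 ⟨D₂, h₂, he⟩⟩),
      hxe, add_mem_add (commonFiber_anti (hesub.trans inter_subset_left) hv₁)
        (commonFiber_anti (hesub.trans inter_subset_right) hw₂)⟩)
  · exact mem_blockSet.2 (.inl ⟨D₁, .inl (.inl h₁), hx₁, add_mem_add hv₁ (hzB D₁)⟩)
  · exact mem_blockSet.2 (.inl ⟨D₂, .inl (.inr h₂), hx₂, add_mem_add (hzA D₂) hw₂⟩)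
  · rw [add_zero]
    exact zero_mem_blockSet (fun d _ => zero_mem_commonFiber_add hA0 hB0 d) x

theorem IsIntervalSystem.isCountableDisjointUnion_iUnion_split [AddCommMonoid V]
    (hS : IsIntervalSystem S) (h𝔇S : 𝔇 ⊆ S) (h𝔇c : 𝔇.Countable) {A B : Set (V × X)}
    (hA0 : ∀ x, ((0 : V), x) ∈ A) (hB0 : ∀ x, ((0 : V), x) ∈ B) {n : ℕ} {c : Fin n → V}
    {E : Fin n → Set X} (hE : ∀ j, E j ∈ S)
    (hgr : ∀ x, (stepVal c E x, x) ∈ blockSet 𝔇 fun d => commonFiber A d + commonFiber B d) :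
    IsCountableDisjointUnion {q ∈ S | (∀ j, q ⊆ E j ∨ Disjoint q (E j)) ∧
      stepValOn c E q ∈ commonFiber A q + commonFiber B q} (⋃ j, E j) := by
  refine (hS.isCountableDisjointUnion_iUnion_homogeneous hE).bind fun p ⟨hpS, hp⟩ => ?_
  by_cases hv : stepValOn c E p = 0
  · exact .of_mem ⟨hpS, hp, hv ▸ zero_mem_commonFiber_add hA0 hB0 p⟩
  have hcov : p ⊆ ⋃₀ {e ∈ 𝔇 | stepValOn c E p ∈ commonFiber A e + commonFiber B e} :=
    fun y hy => by
      have hy' := hgr y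
      rw [stepVal_eq_stepValOn c hp hy, mem_blockSet] at hy'
      rcases hy' with ⟨e, he, hye, hvM⟩ | ⟨hv0, -⟩
      exacts [⟨e, ⟨he, hvM⟩, hye⟩, absurd hv0 hv]
  refine (hS.isCountableDisjointUnion_of_subset_sUnion (fun e he => h𝔇S he.1)
    (h𝔇c.mono (sep_subset _ _)) hpS hcov).mono fun q ⟨hqS, e, ⟨_, hvM⟩, hqe⟩ hqp => ?_
  have hqhom : ∀ j, q ⊆ E j ∨ Disjoint q (E j) := fun j =>
    (hp j).imp hqp.trans (Disjoint.mono_left hqp)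
  refine ⟨hqS, hqhom, ?_⟩
  rcases q.eq_empty_or_nonempty with rfl | ⟨y, hy⟩
  · simp only [commonFiber_empty, univ_add_univ, mem_univ]
  rw [← stepVal_eq_stepValOn c hqhom hy, stepVal_eq_stepValOn c hp (hqp hy)]
  exact add_subset_add (commonFiber_anti hqe) (commonFiber_anti hqe) hvM

end Envelopes

section StepIntegrals

variable {X V W Z : Type*} [AddCommMonoid V] [AddCommMonoid Z] {S : Set (Set X)}

def stepIntegrals (S : Set (Set X)) (L : V → W → Z) (μ : Set X → W) (A : Set (V × X)) :
    Set Z :=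
  {z | ∃ (n : ℕ) (c : Fin n → V) (E : Fin n → Set X),
    (∀ j, E j ∈ S) ∧ (∀ x, (stepVal c E x, x) ∈ A) ∧ z = ∑ j, L (c j) (μ (E j))}

variable {L : V → W → Z} {μ : Set X → W}

theorem preIntegral_eq_closure [TopologicalSpace Z] (A : Set (V × X)) :
    preIntegral S L μ A = closure (stepIntegrals S L μ A) :=
  rfl

theorem add_mem_stepIntegrals {A : Set (V × X)} {n : ℕ} {c : Fin n → V} {F : Fin n → Set X}
    (hF : ∀ k, F k ∈ S) {z : Z} (hz : z ∈ stepIntegrals S L μ (fiberShift (stepVal c F) A)) :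
    z + ∑ k, L (c k) (μ (F k)) ∈ stepIntegrals S L μ A := by
  obtain ⟨m, d, E, hE, hgr, rfl⟩ := hz
  refine ⟨m + n, Fin.append d c, Fin.append E F, Fin.append_mem hE hF, fun x => ?_,
    by simp [Fin.sum_univ_add]⟩
  rw [stepVal_append]
  exact hgr x

theorem sum_mem_stepIntegrals {A : Set (V × X)} (hA0 : ∀ x, ((0 : V), x) ∈ A)
    {𝒬 : Set (Set X)} (h𝒬S : 𝒬 ⊆ S) (h𝒬d : 𝒬.PairwiseDisjoint id) (p : 𝒬 → V)
    (hp : ∀ q : 𝒬, p q ∈ commonFiber A (q : Set X)) (G : Finset 𝒬) :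
    ∑ q ∈ G, L (p q) (μ q) ∈ stepIntegrals S L μ A := by
  classical
  let e := G.equivFin
  have hval : ∀ x, stepVal (fun k => p (e.symm k)) (fun k => (e.symm k : Set X)) x =
      ∑ q ∈ G, (q : Set X).indicator (fun _ => p q) x := fun x => by
    rw [stepVal, ← G.sum_coe_sort]
    exact e.symm.sum_comp fun q : G => ((q : 𝒬) : Set X).indicator (fun _ => p (q : 𝒬)) x
  refine ⟨G.card, fun k => p (e.symm k), fun k => (e.symm k : Set X),
    fun k => h𝒬S (e.symm k : 𝒬).2, fun x => ?_, ?_⟩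
  · rw [hval]
    by_cases hx : ∃ q ∈ G, x ∈ (q : Set X)
    · obtain ⟨q, hqG, hxq⟩ := hx
      have hother : ∀ q' ∈ G, q' ≠ q → (q' : Set X).indicator (fun _ => p q') x = 0 :=
        fun q' _ hq' => indicator_of_notMem (fun hxq' => disjoint_left.1
          (h𝒬d q'.2 q.2 (Subtype.coe_injective.ne hq')) hxq' hxq) _
      rw [Finset.sum_eq_single_of_mem q hqG hother, indicator_of_mem hxq]
      exact hp q x hxq
    · push Not at hx
      rw [Finset.sum_eq_zero fun q hq => indicator_of_notMem (hx q hq) _]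
      exact hA0 x
  · rw [← G.sum_coe_sort]
    exact (e.symm.sum_comp fun q : G => L (p (q : 𝒬)) (μ (q : 𝒬))).symm

end StepIntegrals

section Summation

variable {X V W Z : Type*} [AddCommMonoid V] [AddCommGroup Z] {S : Set (Set X)} {L : V → W → Z}
  {μ : Set X → W}

theorem IsAddMeasure.hasSum [AddCommMonoid W] [TopologicalSpace W] (hμ : IsAddMeasure S μ)
    {ι : Type*} [Countable ι] {A : ι → Set X} {B : Set X}
    (hA : ∀ i, A i ∈ S) (hd : Pairwise (Disjoint on A)) (hB : B ∈ S) (hU : ⋃ i, A i = B) :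
    HasSum (fun i => μ (A i)) (μ B) := by
  obtain ⟨φ, hφ⟩ := exists_injective_nat ι
  let e := Equiv.ofInjective φ hφ
  rw [← e.symm.hasSum_iff]
  exact hμ _ (A ∘ e.symm) B inferInstance hB (fun i => hA _)
    (hd.comp_of_injective e.symm.injective) (by rw [← hU]; exact e.symm.surjective.iUnion_comp A)

theorem hasSum_stepValOn [AddCommMonoid W] [TopologicalSpace W] [TopologicalSpace Z]
    [ContinuousAdd Z] (hL1 : ∀ v₁ v₂ w, L (v₁ + v₂) w = L v₁ w + L v₂ w)
    (hL2 : ∀ v w₁ w₂, L v (w₁ + w₂) = L v w₁ + L v w₂) (hLc : ∀ v, Continuous fun w => L v w)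
    (hμ : IsAddMeasure S μ) {n : ℕ} {c : Fin n → V} {E : Fin n → Set X} (hE : ∀ j, E j ∈ S)
    {𝒬 : Set (Set X)} (h𝒬c : 𝒬.Countable) (h𝒬S : 𝒬 ⊆ S) (h𝒬d : 𝒬.PairwiseDisjoint id)
    (h𝒬E : ∀ q ∈ 𝒬, ∀ j, q ⊆ E j ∨ Disjoint q (E j)) (hcov : ⋃ j, E j ⊆ ⋃₀ 𝒬) :
    HasSum (fun q : 𝒬 => L (stepValOn c E q) (μ q)) (∑ j, L (c j) (μ (E j))) := by
  classical
  have := h𝒬c.to_subtype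
  have hj : ∀ j, HasSum (fun q : 𝒬 => if (q : Set X) ⊆ E j then L (c j) (μ q) else 0)
      (L (c j) (μ (E j))) := by
    intro j
    have hμj : HasSum (fun q : {q : 𝒬 | (q : Set X) ⊆ E j} => μ q) (μ (E j)) := by
      refine hμ.hasSum (fun q => h𝒬S q.1.2)
        (fun q q' hne => h𝒬d q.1.2 q'.1.2 fun h => hne (Subtype.ext (Subtype.ext h))) (hE j)
        (Subset.antisymm (iUnion_subset fun q => q.2) fun x hx => ?_)
      obtain ⟨q, hq, hxq⟩ := hcov (mem_iUnion.2 ⟨j, hx⟩)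
      have hqE : q ⊆ E j := (h𝒬E q hq j).resolve_right (not_disjoint_iff.2 ⟨x, hxq, hx⟩)
      exact mem_iUnion.2 ⟨⟨⟨q, hq⟩, hqE⟩, hxq⟩
    have hLj : HasSum ((fun q : 𝒬 => L (c j) (μ q)) ∘ Subtype.val
        (p := (· ∈ {q : 𝒬 | (q : Set X) ⊆ E j}))) (L (c j) (μ (E j))) :=
      hμj.map (AddMonoidHom.mk' (L (c j)) (hL2 (c j))) (hLc (c j))
    rw [hasSum_subtype_iff_indicator] at hLj
    convert hLj using 2 with q
    simp only [indicator_apply]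
    rfl
  convert hasSum_sum fun j (_ : j ∈ Finset.univ) => hj j with q
  let φ : V →+ Z := AddMonoidHom.mk' (L · (μ q)) fun a b => hL1 a b _
  change φ (stepValOn c E q) = _
  simp only [stepValOn, map_sum, apply_ite φ, map_zero]
  rfl

theorem stepIntegrals_blockSet_add_subset [AddCommMonoid W] [TopologicalSpace W]
    [TopologicalSpace Z] [ContinuousAdd Z] (hS : IsIntervalSystem S)
    (hL1 : ∀ v₁ v₂ w, L (v₁ + v₂) w = L v₁ w + L v₂ w)
    (hL2 : ∀ v w₁ w₂, L v (w₁ + w₂) = L v w₁ + L v w₂) (hLc : ∀ v, Continuous fun w => L v w)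
    (hμ : IsAddMeasure S μ) {A B : Set (V × X)} (hA0 : ∀ x, ((0 : V), x) ∈ A)
    (hB0 : ∀ x, ((0 : V), x) ∈ B) {𝔇 : Set (Set X)} (h𝔇S : 𝔇 ⊆ S) (h𝔇c : 𝔇.Countable) :
    stepIntegrals S L μ (blockSet 𝔇 fun d => commonFiber A d + commonFiber B d) ⊆
      closure (stepIntegrals S L μ A + stepIntegrals S L μ B) := by
  rintro _ ⟨n, c, E, hE, hgr, rfl⟩
  obtain ⟨𝒬, h𝒬S, h𝒬c, h𝒬d, h𝒬U⟩ := hS.isCountableDisjointUnion_iUnion_split h𝔇S h𝔇c hA0 hB0 hE hgr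
  have hsum := hasSum_stepValOn (c := c) hL1 hL2 hLc hμ hE h𝒬c (fun q hq => (h𝒬S hq).1) h𝒬d
    (fun q hq => (h𝒬S hq).2.1) h𝒬U.ge
  choose p hp β hβ hpβ using fun q : 𝒬 => (h𝒬S q.2).2.2
  simp_rw [← hpβ, hL1] at hsum
  refine mem_closure_of_tendsto hsum (.of_forall fun G => ?_)
  rw [Finset.sum_add_distrib]
  exact add_mem_add (sum_mem_stepIntegrals hA0 (fun q hq => (h𝒬S hq).1) h𝒬d p hp G)
    (sum_mem_stepIntegrals hB0 (fun q hq => (h𝒬S hq).1) h𝒬d β hβ G)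

end Summation

section Integral

variable {X V W Z : Type*} [AddCommGroup Z] [TopologicalSpace Z] [IsTopologicalAddGroup Z]
  {S : Set (Set X)} {L : V → W → Z} {μ : Set X → W}

theorem hasLMIntegral_iff [AddCommMonoid V] {f : X → V} {a : Z} :
    HasLMIntegral S L μ f a ↔ ∀ N ∈ 𝓝 a, ∃ A, IsEnvelope S A ∧ (∀ x, (f x, x) ∈ A) ∧
      preIntegral S L μ A ⊆ N := by
  refine ⟨fun h N hN => ?_, fun h T hT => ?_⟩
  · obtain ⟨A, hA, hfA, hAT⟩ := h ((a + ·) ⁻¹' N)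
      ((continuous_const_add a).continuousAt.preimage_mem_nhds (by rwa [add_zero]))
    refine ⟨A, hA, hfA, fun z hz => ?_⟩
    obtain ⟨t, ht, rfl⟩ := hAT hz
    exact ht
  · obtain ⟨A, hA, hfA, hAN⟩ := h ((· - a) ⁻¹' T)
      ((continuous_sub_right a).continuousAt.preimage_mem_nhds (by rwa [sub_self]))
    exact ⟨A, hA, hfA, fun z hz => ⟨z - a, hAN hz, by abel⟩⟩

variable [AddCommGroup V]

theorem preIntegral_fiberShift_blockSet_add_subset [AddCommMonoid W] [TopologicalSpace W]
    (hS : IsIntervalSystem S) (hL1 : ∀ v₁ v₂ w, L (v₁ + v₂) w = L v₁ w + L v₂ w)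
    (hL2 : ∀ v w₁ w₂, L v (w₁ + w₂) = L v w₁ + L v w₂) (hLc : ∀ v, Continuous fun w => L v w)
    (hμ : IsAddMeasure S μ) {A B : Set (V × X)} {m n : ℕ} {a : Fin m → V} {b : Fin n → V}
    {F : Fin m → Set X} {G : Fin n → Set X} (hF : ∀ k, F k ∈ S) (hG : ∀ k, G k ∈ S)
    (hσA : ∀ x, (stepVal a F x, x) ∈ A) (hσB : ∀ x, (stepVal b G x, x) ∈ B)
    {𝔇 : Set (Set X)} (h𝔇S : 𝔇 ⊆ S) (h𝔇c : 𝔇.Countable) :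
    preIntegral S L μ (fiberShift (stepVal (-Fin.append a b) (Fin.append F G))
        (blockSet 𝔇 fun d =>
          commonFiber (fiberShift (stepVal a F) A) d + commonFiber (fiberShift (stepVal b G) B) d))
      ⊆ closure (preIntegral S L μ A + preIntegral S L μ B) := by
  rw [preIntegral_eq_closure]
  refine closure_minimal (fun z hz => ?_) isClosed_closure
  have hC₀ := stepIntegrals_blockSet_add_subset hS hL1 hL2 hLc hμ
    (fun x => by simpa [fiberShift] using hσA x) (fun x => by simpa [fiberShift] using hσB x)
    h𝔇S h𝔇c (add_mem_stepIntegrals (Fin.append_mem hF hG) hz)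
  have hmaps : MapsTo (· - ∑ k, L ((-Fin.append a b) k) (μ (Fin.append F G k)))
      (stepIntegrals S L μ (fiberShift (stepVal a F) A) +
        stepIntegrals S L μ (fiberShift (stepVal b G) B))
      (stepIntegrals S L μ A + stepIntegrals S L μ B) := by
    rintro _ ⟨u, hu, u', hu', rfl⟩
    convert add_mem_add (add_mem_stepIntegrals hF hu) (add_mem_stepIntegrals hG hu') using 1
    simp [Fin.sum_univ_add, apply_neg_left hL1]
    abel
  have := map_mem_closure (continuous_sub_right _) hC₀ hmaps
  rw [add_sub_cancel_right] at this
  exact closure_mono (add_subset_add subset_closure subset_closure) this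

theorem exists_envelope_add [AddCommMonoid W] [TopologicalSpace W] (hS : IsIntervalSystem S)
    (hL1 : ∀ v₁ v₂ w, L (v₁ + v₂) w = L v₁ w + L v₂ w)
    (hL2 : ∀ v w₁ w₂, L v (w₁ + w₂) = L v w₁ + L v w₂) (hLc : ∀ v, Continuous fun w => L v w)
    (hμ : IsAddMeasure S μ) {A B : Set (V × X)} {f g : X → V} (hA : IsEnvelope S A)
    (hB : IsEnvelope S B) (hfA : ∀ x, (f x, x) ∈ A) (hgB : ∀ x, (g x, x) ∈ B) :
    ∃ C, IsEnvelope S C ∧ (∀ x, (f x + g x, x) ∈ C) ∧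
      preIntegral S L μ C ⊆ closure (preIntegral S L μ A + preIntegral S L μ B) := by
  obtain ⟨m, a, F, 𝔇A, hF, hσA, hA₀, hσA0⟩ := hA.exists_centered hS
  obtain ⟨n, b, G, 𝔇B, hG, hσB, hB₀, hσB0⟩ := hB.exists_centered hS
  obtain ⟨𝔇, h𝔇S, h𝔇c, h𝔇U, hadd⟩ := hA₀.exists_blockSet_add hS hB₀
    (fun x => by simpa [fiberShift] using hσA x) (fun x => by simpa [fiberShift] using hσB x)
  have hτ : ∀ x, stepVal (-Fin.append a b) (Fin.append F G) x =
      -(stepVal a F x + stepVal b G x) := fun x => by rw [stepVal_neg, stepVal_append]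
  set C₀ := blockSet 𝔇 fun d =>
    commonFiber (fiberShift (stepVal a F) A) d + commonFiber (fiberShift (stepVal b G) B) d
  set C := fiberShift (stepVal (-Fin.append a b) (Fin.append F G)) C₀
  obtain ⟨𝔇C, hC, -⟩ := (isGeneratedBy_blockSet h𝔇S h𝔇c _).fiberShift hS
    (Fin.append_mem hF hG) fun x hx => by
      rw [hτ, hσA0 x fun h => hx (h𝔇U (.inl h)), hσB0 x fun h => hx (h𝔇U (.inr h)), add_zero,
        neg_zero]
  have hσC : ∀ x, (stepVal (Fin.append a b) (Fin.append F G) x, x) ∈ C := fun x => by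
    change (_ + _, x) ∈ C₀
    rw [hτ, stepVal_append, add_neg_cancel, ← add_zero (0 : V)]
    exact hadd 0 0 x (by simpa [fiberShift] using hσA x) (by simpa [fiberShift] using hσB x)
  refine ⟨C, isEnvelope_iff.2 ⟨⟨m + n, _, _, Fin.append_mem hF hG, hσC⟩, 𝔇C, hC⟩, fun x => ?_,
    preIntegral_fiberShift_blockSet_add_subset hS hL1 hL2 hLc hμ hF hG hσA hσB h𝔇S h𝔇c⟩
  change (f x + g x + _, x) ∈ C₀
  rw [hτ]
  convert hadd (f x - stepVal a F x) (g x - stepVal b G x) x ?_ ?_ using 2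
  · abel
  · simpa [fiberShift] using hfA x
  · simpa [fiberShift] using hgB x

theorem exists_envelope_neg (hL1 : ∀ v₁ v₂ w, L (v₁ + v₂) w = L v₁ w + L v₂ w)
    {A : Set (V × X)} {f : X → V} (hA : IsEnvelope S A) (hfA : ∀ x, (f x, x) ∈ A) :
    ∃ C, IsEnvelope S C ∧ (∀ x, (-f x, x) ∈ C) ∧
      preIntegral S L μ C ⊆ -preIntegral S L μ A := by
  obtain ⟨⟨n, c, E, hE, hσ⟩, 𝔇, hgen⟩ := isEnvelope_iff.1 hA
  refine ⟨{p | (-p.1, p.2) ∈ A}, isEnvelope_iff.2 ⟨⟨n, -c, E, hE, fun x => ?_⟩, 𝔇,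
    .of_forall hgen.1 hgen.2.1 (fun v x hvx => ?_) fun x hx => ?_⟩, fun x => ?_, ?_⟩
  · change (-stepVal (-c) E x, x) ∈ A
    rw [stepVal_neg, neg_neg]
    exact hσ x
  · rcases hgen.mem_cases hvx with ⟨d, hd, hxd, hv⟩ | ⟨hv, hx⟩
    exacts [.inl ⟨d, hd, hxd, hv⟩, .inr ⟨neg_eq_zero.1 hv, hx⟩]
  · change (-0, x) ∈ A
    rw [neg_zero]
    exact hgen.zero_mem hx
  · change (- -f x, x) ∈ A
    rw [neg_neg]
    exact hfA x
  · rw [preIntegral_eq_closure, preIntegral_eq_closure, neg_closure]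
    refine closure_mono ?_
    rintro _ ⟨m, d, F, hF, hgr, rfl⟩
    refine ⟨m, -d, F, hF, fun x => ?_, by simp [apply_neg_left hL1]⟩
    rw [stepVal_neg]
    exact hgr x

theorem HasLMIntegral.add [AddCommMonoid W] [TopologicalSpace W] (hS : IsIntervalSystem S)
    (hL1 : ∀ v₁ v₂ w, L (v₁ + v₂) w = L v₁ w + L v₂ w)
    (hL2 : ∀ v w₁ w₂, L v (w₁ + w₂) = L v w₁ + L v w₂) (hLc : ∀ v, Continuous fun w => L v w)
    (hμ : IsAddMeasure S μ) {f g : X → V} {a b : Z} (hf : HasLMIntegral S L μ f a)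
    (hg : HasLMIntegral S L μ g b) : HasLMIntegral S L μ (fun x => f x + g x) (a + b) := by
  rw [hasLMIntegral_iff] at hf hg ⊢
  intro N hN
  obtain ⟨N', ⟨hN', hN'c⟩, hN'N⟩ := (closed_nhds_basis (a + b)).mem_iff.1 hN
  obtain ⟨U, hU, U', hU', hUU'⟩ := mem_nhds_prod_iff.1 (continuous_add.tendsto (a, b) hN')
  obtain ⟨A, hA, hfA, hAU⟩ := hf U hU
  obtain ⟨B, hB, hgB, hBU⟩ := hg U' hU'
  obtain ⟨C, hC, hfgC, hCAB⟩ := exists_envelope_add hS hL1 hL2 hLc hμ hA hB hfA hgB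
  refine ⟨C, hC, hfgC, hCAB.trans ((closure_minimal ?_ hN'c).trans hN'N)⟩
  rintro _ ⟨u, hu, u', hu', rfl⟩
  exact hUU' (mk_mem_prod (hAU hu) (hBU hu'))

theorem HasLMIntegral.neg (hL1 : ∀ v₁ v₂ w, L (v₁ + v₂) w = L v₁ w + L v₂ w)
    {f : X → V} {a : Z} (hf : HasLMIntegral S L μ f a) :
    HasLMIntegral S L μ (fun x => -f x) (-a) := by
  rw [hasLMIntegral_iff] at hf ⊢
  intro N hN
  obtain ⟨A, hA, hfA, hAN⟩ := hf (-N) (continuous_neg.continuousAt.preimage_mem_nhds hN)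
  obtain ⟨C, hC, hfC, hCA⟩ := exists_envelope_neg hL1 hA hfA
  exact ⟨C, hC, hfC, hCA.trans (neg_subset.2 hAN)⟩

end Integral

theorem statement11_general {X V W Z : Type*}
    [AddCommGroup V]
    [AddCommGroup W] [UniformSpace W]
    [AddCommGroup Z] [UniformSpace Z] [IsUniformAddGroup Z]
    (S : Set (Set X)) (hS : IsIntervalSystem S)
    (L : V → W → Z)
    (hL1 : ∀ v₁ v₂ w, L (v₁ + v₂) w = L v₁ w + L v₂ w)
    (hL2 : ∀ v w₁ w₂, L v (w₁ + w₂) = L v w₁ + L v w₂)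
    (hLc : ∀ v, Continuous fun w => L v w)
    (μ : Set X → W) (hμ : IsAddMeasure S μ)
    (f g : X → V) (a b : Z)
    (hf : HasLMIntegral S L μ f a) (hg : HasLMIntegral S L μ g b) :
    HasLMIntegral S L μ (fun x => f x + g x) (a + b) ∧
    HasLMIntegral S L μ (fun x => -f x) (-a) :=
  ⟨hf.add hS hL1 hL2 hLc hμ hg, hf.neg hL1⟩

/-- If `f, g : X → V` are Lebesgue–McShane integrable (with integrals `a`, `b`),
then `f + g` and `-f` are Lebesgue–McShane integrable with
`∫L(f + g, μ) = ∫L(f, μ) + ∫L(g, μ)` and `∫L(-f, μ) = -∫L(f, μ)`. -/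
theorem statement11 {X V W Z : Type*}
    [AddCommGroup V] [UniformSpace V] [IsUniformAddGroup V] [CompleteSpace V] [T2Space V]
    [AddCommGroup W] [UniformSpace W] [IsUniformAddGroup W] [CompleteSpace W] [T2Space W]
    [AddCommGroup Z] [UniformSpace Z] [IsUniformAddGroup Z] [CompleteSpace Z] [T2Space Z]
    (S : Set (Set X)) (hS : IsIntervalSystem S)
    (L : V → W → Z)
    (hL1 : ∀ v₁ v₂ w, L (v₁ + v₂) w = L v₁ w + L v₂ w)
    (hL2 : ∀ v w₁ w₂, L v (w₁ + w₂) = L v w₁ + L v w₂)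
    (hLc : ∀ v, Continuous fun w => L v w)
    (μ : Set X → W) (hμ : IsAddMeasure S μ)
    (f g : X → V) (a b : Z)
    (hf : HasLMIntegral S L μ f a) (hg : HasLMIntegral S L μ g b) :
    HasLMIntegral S L μ (fun x => f x + g x) (a + b) ∧
    HasLMIntegral S L μ (fun x => -f x) (-a) :=
  statement11_general S hS L hL1 hL2 hLc μ hμ f g a b hf hg
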